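/- arXiv:2410.00560 — 2 statements merged into one kernel-verified Lean document; each statement's English description precedes it below -/
import Mathlib

section
/- Let q ≥ 1, let Γ_q be the group with presentation ⟨x, y, z ∣ [x,y] = z^q, xz = zx, yz = zy⟩, and let p be an odd prime dividing q. Then the commutator subgroup Γ_q′ is contained in X^p(Γ_q), the subgroup generated by all p-th powers of elements of Γ_q. -/
/-- The relators of the presentation `⟨x, y, z ∣ [x,y] = z^q, xz = zx, yz = zy⟩`,
as elements of the free group on three generators `x = 0`, `y = 1`, `z = 2`. -/
def nilRels (q : ℕ) : Set (FreeGroup (Fin 3)) :=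
  { FreeGroup.of 0 * FreeGroup.of 1 * (FreeGroup.of 0)⁻¹ * (FreeGroup.of 1)⁻¹ *
      (FreeGroup.of 2 ^ q)⁻¹,
    FreeGroup.of 0 * FreeGroup.of 2 * (FreeGroup.of 0)⁻¹ * (FreeGroup.of 2)⁻¹,
    FreeGroup.of 1 * FreeGroup.of 2 * (FreeGroup.of 1)⁻¹ * (FreeGroup.of 2)⁻¹ }

/-- `X^r(G)`: the verbal subgroup generated by all `r`-th powers of elements of `G`. -/
def verbalPower (G : Type*) [Group G] (r : ℕ) : Subgroup G :=
  Subgroup.closure (Set.range fun g : G => g ^ r)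

/-! Modulo `X^p(Γ_q)` the relation `[x,y] = z^q` becomes `[x,y] = 1`, since `p ∣ q` makes `z^q`
a `p`-th power. So the generators `x, y, z` commute pairwise in `Γ_q / X^p(Γ_q)`, which is
therefore abelian; that is, `Γ_q′ ≤ X^p(Γ_q)`. -/

open Subgroup
open scoped commutatorElement

theorem verbalPower_normal (G : Type*) [Group G] (r : ℕ) : (verbalPower G r).Normal :=
  normalizer_eq_top_iff.mp <| eq_top_iff.mpr <| le_normalizer_closure_iff.mpr
    fun g _ _ ⟨a, ha⟩ => subset_closure ⟨g * a * g⁻¹, ha ▸ conj_pow ..⟩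

theorem pow_mem_verbalPower {G : Type*} [Group G] {r n : ℕ} (hrn : r ∣ n) (g : G) :
    g ^ n ∈ verbalPower G r := by
  obtain ⟨m, rfl⟩ := hrn
  rw [pow_mul']
  exact subset_closure ⟨g ^ m, rfl⟩

theorem commutator_le_of_closure_eq_top {G : Type*} [Group G] {N : Subgroup G} [N.Normal]
    {S : Set G} (hS : closure S = ⊤) (hSN : ∀ a ∈ S, ∀ b ∈ S, ⁅a, b⁆ ∈ N) :
    commutator G ≤ N := by
  rw [← Normal.quotient_commutative_iff_commutator_le]
  set S' := QuotientGroup.mk' N '' S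
  have hS' : closure S' = ⊤ := by
    rw [← MonoidHom.map_closure, hS, ← MonoidHom.range_eq_map, MonoidHom.range_eq_top]
    exact QuotientGroup.mk'_surjective N
  have hcomm : ∀ a ∈ S', ∀ b ∈ S', a * b = b * a := by
    rintro _ ⟨a, ha, rfl⟩ _ ⟨b, hb, rfl⟩
    rw [← commutatorElement_eq_one_iff_mul_comm, ← map_commutatorElement,
      QuotientGroup.mk'_apply, QuotientGroup.eq_one_iff]
    exact hSN a ha b hb
  have hcent (a : G ⧸ N) : a ∈ Set.centralizer (Set.centralizer S') :=
    closure_le_centralizer_centralizer S' (hS' ▸ mem_top a)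
  exact ⟨⟨fun a b => Set.centralizer_centralizer_comm_of_comm hcomm a (hcent a) b (hcent b)⟩⟩

namespace nilRels

open PresentedGroup

variable {q : ℕ}

theorem commutatorElement_of_zero_of_one :
    ⁅(of 0 : PresentedGroup (nilRels q)), (of 1 : PresentedGroup (nilRels q))⁆ = of 2 ^ q := by
  rw [commutatorElement_def, ← mul_inv_eq_one]
  exact one_of_mem (Set.mem_insert _ _)

theorem commutatorElement_of_zero_of_two :
    ⁅(of 0 : PresentedGroup (nilRels q)), (of 2 : PresentedGroup (nilRels q))⁆ = 1 :=
  one_of_mem (Set.mem_insert_of_mem _ (Set.mem_insert _ _))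

theorem commutatorElement_of_one_of_two :
    ⁅(of 1 : PresentedGroup (nilRels q)), (of 2 : PresentedGroup (nilRels q))⁆ = 1 :=
  one_of_mem (Set.mem_insert_of_mem _ (Set.mem_insert_of_mem _ rfl))

end nilRels

theorem stmt14_general (q : ℕ) (p : ℕ) (hpq : p ∣ q) :
    commutator (PresentedGroup (nilRels q)) ≤
      verbalPower (PresentedGroup (nilRels q)) p := by
  have := verbalPower_normal (PresentedGroup (nilRels q)) p
  refine commutator_le_of_closure_eq_top (PresentedGroup.closure_range_of _) ?_
  have hxy := nilRels.commutatorElement_of_zero_of_one (q := q)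
  have hxz := nilRels.commutatorElement_of_zero_of_two (q := q)
  have hyz := nilRels.commutatorElement_of_one_of_two (q := q)
  rintro _ ⟨i, rfl⟩ _ ⟨j, rfl⟩
  fin_cases i <;> fin_cases j <;>
    simp [hxy, hxz, hyz, ← commutatorElement_inv, pow_mem_verbalPower hpq]

/-- Let `q ≥ 1`, let `Γ_q = ⟨x, y, z ∣ [x,y] = z^q, xz = zx, yz = zy⟩`, and let `p` be
an odd prime dividing `q`.  Then the commutator subgroup `Γ_q′` is contained in
`X^p(Γ_q)`, the subgroup generated by all `p`-th powers of elements of `Γ_q`. -/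
theorem stmt14 (q : ℕ) (hq : 1 ≤ q) (p : ℕ) (hp : Nat.Prime p) (hodd : Odd p)
    (hpq : p ∣ q) :
    commutator (PresentedGroup (nilRels q)) ≤
      verbalPower (PresentedGroup (nilRels q)) p :=
  stmt14_general q p hpq
end

section
/- For q ≥ 1, let Γ_q be the group with presentation ⟨x, y, z ∣ [x,y] = z^q, xz = zx, yz = zy⟩. Then the second group cohomology H²(Γ_q; ℤ), with trivial coefficients ℤ, is isomorphic as an abelian group to ℤ ⊕ ℤ ⊕ ℤ/qℤ. -/
/-!
A 2-cocycle `f` on `Γ_q` with values in `ℤ` defines a central extension `E_f` of `Γ_q` by `ℤ`,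
and `f` is a coboundary exactly when `E_f → Γ_q` has a homomorphic section, i.e. when lifts of
`x`, `y`, `z` to `E_f` can be chosen to satisfy the defining relations. The failure of the three
relations for the lifts `(0, x)`, `(0, y)`, `(0, z)` is measured by three integers depending
linearly on `f`. Changing the lifts of `x` and `y` does not affect them; changing the lift of `z`
by `t` shifts the defect of `xy = z^q yx` by `q t`. Hence these defects, the last one read
modulo `q`, give an injective map `H²(Γ_q; ℤ) → ℤ × ℤ × ℤ/q`. It is surjective: pulling back
explicit cocycles along `Γ_q → ℤ³` (coordinates of the normal form `y^b x^a z^c`) realizes the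
three generators, the last one by the cup product `a ∪ b`.
-/

open groupCohomology

universe u

noncomputable def groupCohomology.H2AddEquivOfSurjective {k G : Type u} [CommRing k] [Group G]
    {A : Rep k G} {M : Type*} [AddCommGroup M] (Φ : cocycles₂ A →+ M)
    (hΦ : Function.Surjective Φ) (hker : ∀ f, Φ f = 0 ↔ ⇑f ∈ coboundaries₂ A) : H2 A ≃+ M :=
  (QuotientAddGroup.quotientKerEquivOfSurjective (H2π A).hom.toAddMonoidHom
      ((ModuleCat.epi_iff_surjective _).1 inferInstance)).symm.trans <|
    (QuotientAddGroup.quotientAddEquivOfEq <| by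
      ext f
      rw [AddMonoidHom.mem_ker, AddMonoidHom.mem_ker, hker]
      exact H2π_eq_zero_iff f).trans
      (QuotientAddGroup.quotientKerEquivOfSurjective Φ hΦ)

section TrivialCoefficients

variable {G H : Type} [Group G] [Group H]

lemma mem_cocycles₂_trivial_iff (f : G × G → ℤ) :
    f ∈ cocycles₂ (Rep.trivial ℤ G ℤ) ↔
      ∀ g h j : G, f (g * h, j) + f (g, h) = f (h, j) + f (g, h * j) := by
  simp only [mem_cocycles₂_iff, Representation.trivial_apply]

lemma cocycles₂_trivial_map_one_snd (f : cocycles₂ (Rep.trivial ℤ G ℤ)) (g : G) :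
    f (g, 1) = f (1, 1) := by
  simpa using cocycles₂_map_one_snd f g

lemma cocycles₂_trivial_map_inv_fst (f : cocycles₂ (Rep.trivial ℤ G ℤ)) (g : G) :
    f (g⁻¹, g) = f (g, g⁻¹) := by
  have := cocycles₂_ρ_map_inv_sub_map_inv f g
  rwa [Rep.trivial_ρ_apply, cocycles₂_trivial_map_one_snd f g, sub_self, sub_eq_zero] at this

lemma comp_prodMap_mem_cocycles₂ (ρ : G →* H) {f : H × H → ℤ}
    (hf : f ∈ cocycles₂ (Rep.trivial ℤ H ℤ)) :
    f ∘ Prod.map ρ ρ ∈ cocycles₂ (Rep.trivial ℤ G ℤ) := by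
  rw [mem_cocycles₂_trivial_iff] at hf ⊢
  intro g h j
  simpa only [Function.comp_apply, Prod.map, map_mul] using hf (ρ g) (ρ h) (ρ j)

end TrivialCoefficients

@[ext]
structure CocycleExtension {G : Type} [Group G] (f : cocycles₂ (Rep.trivial ℤ G ℤ)) where
  central : ℤ
  base : G

namespace CocycleExtension

variable {G : Type} [Group G] (f : cocycles₂ (Rep.trivial ℤ G ℤ))

instance : Group (CocycleExtension f) where
  mul p p' := ⟨p.central + p'.central + f (p.base, p'.base), p.base * p'.base⟩
  one := ⟨-f (1, 1), 1⟩
  inv p := ⟨-p.central - f (p.base, p.base⁻¹) - f (1, 1), p.base⁻¹⟩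
  mul_assoc p p' p'' := by
    ext
    · show p.central + p'.central + f (p.base, p'.base) + p''.central
          + f (p.base * p'.base, p''.base)
        = p.central + (p'.central + p''.central + f (p'.base, p''.base))
          + f (p.base, p'.base * p''.base)
      linarith [(mem_cocycles₂_trivial_iff f).1 f.2 p.base p'.base p''.base]
    · exact mul_assoc _ _ _
  one_mul p := by
    ext
    · show -f (1, 1) + p.central + f (1, p.base) = p.central
      rw [cocycles₂_map_one_fst f p.base]; ring
    · exact one_mul _
  mul_one p := by
    ext
    · show p.central + -f (1, 1) + f (p.base, 1) = p.central
      rw [cocycles₂_trivial_map_one_snd f p.base]; ring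
    · exact mul_one _
  inv_mul_cancel p := by
    ext
    · show -p.central - f (p.base, p.base⁻¹) - f (1, 1) + p.central + f (p.base⁻¹, p.base)
        = -f (1, 1)
      rw [cocycles₂_trivial_map_inv_fst f p.base]; ring
    · exact inv_mul_cancel _

def proj : CocycleExtension f →* G where
  toFun := base
  map_one' := rfl
  map_mul' _ _ := rfl

variable {f}

lemma mk_mul_mk (a b : ℤ) (g h : G) :
    (⟨a, g⟩ * ⟨b, h⟩ : CocycleExtension f) = ⟨a + b + f (g, h), g * h⟩ := rfl

lemma mk_pow (a : ℤ) (g : G) (n : ℕ) :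
    (⟨a, g⟩ : CocycleExtension f) ^ n =
      ⟨n * a - f (1, 1) + ∑ i ∈ Finset.range n, f (g ^ i, g), g ^ n⟩ := by
  induction n with
  | zero =>
    simp only [pow_zero, Nat.cast_zero, zero_mul, zero_sub, Finset.range_zero, Finset.sum_empty,
      add_zero]
    rfl
  | succ n ih =>
    rw [pow_succ, ih, mk_mul_mk, pow_succ, Finset.sum_range_succ]
    push_cast
    congr 1
    ring

lemma commute_mk {a b : ℤ} {g h : G} (hgh : Commute g h) (hf : f (g, h) = f (h, g)) :
    Commute (⟨a, g⟩ : CocycleExtension f) ⟨b, h⟩ := by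
  show _ * _ = _ * _
  rw [mk_mul_mk, mk_mul_mk, hf, hgh.eq, add_comm a]

lemma mem_coboundaries₂_of_section {s : G →* CocycleExtension f}
    (hs : (proj f).comp s = MonoidHom.id G) : ⇑f ∈ coboundaries₂ (Rep.trivial ℤ G ℤ) := by
  refine ⟨fun g => -(s g).central, funext fun ⟨g, h⟩ => ?_⟩
  have hbase (g : G) : (s g).base = g := DFunLike.congr_fun hs g
  have hmul : (s (g * h)).central = (s g).central + (s h).central + f ((s g).base, (s h).base) := by
    rw [map_mul]; rfl
  simp only [d₁₂_hom_apply, Representation.trivial_apply, hmul, hbase]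
  ring

end CocycleExtension

lemma Ring.choose_two_add {R : Type*} [CommRing R] [BinomialRing R] (s t : R) :
    Ring.choose (s + t) 2 = Ring.choose s 2 + Ring.choose t 2 + s * t := by
  rw [Ring.add_choose_eq 2 (Commute.all s t)]
  simp [Finset.Nat.antidiagonal_succ]
  ring

/-- `⟨a, b, c⟩` stands for the normal form `y^b x^a z^c` in `Γ_q`. -/
@[ext]
structure Heis (q : ℕ) where
  a : ℤ
  b : ℤ
  c : ℤ

namespace Heis

variable {q : ℕ}

instance : Mul (Heis q) := ⟨fun g h => ⟨g.a + h.a, g.b + h.b, g.c + h.c + q * g.a * h.b⟩⟩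
instance : One (Heis q) := ⟨⟨0, 0, 0⟩⟩
instance : Inv (Heis q) := ⟨fun g => ⟨-g.a, -g.b, -g.c + q * g.a * g.b⟩⟩

@[simp] lemma mul_a (g h : Heis q) : (g * h).a = g.a + h.a := rfl
@[simp] lemma mul_b (g h : Heis q) : (g * h).b = g.b + h.b := rfl
@[simp] lemma mul_c (g h : Heis q) : (g * h).c = g.c + h.c + q * g.a * h.b := rfl
@[simp] lemma one_a : (1 : Heis q).a = 0 := rfl
@[simp] lemma one_b : (1 : Heis q).b = 0 := rfl
@[simp] lemma one_c : (1 : Heis q).c = 0 := rfl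
@[simp] lemma inv_a (g : Heis q) : g⁻¹.a = -g.a := rfl
@[simp] lemma inv_b (g : Heis q) : g⁻¹.b = -g.b := rfl
@[simp] lemma inv_c (g : Heis q) : g⁻¹.c = -g.c + q * g.a * g.b := rfl

instance : Group (Heis q) where
  mul_assoc g h k := by ext <;> simp <;> ring
  one_mul g := by ext <;> simp
  mul_one g := by ext <;> simp
  inv_mul_cancel g := by ext <;> simp

@[simp] lemma mk_zero_zero_pow (c : ℤ) (n : ℕ) : (⟨0, 0, c⟩ : Heis q) ^ n = ⟨0, 0, n * c⟩ := by
  induction n with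
  | zero => ext <;> simp
  | succ n ih => rw [pow_succ, ih]; ext <;> simp; ring

/- The binomial terms turn `a ∪ c` and `c ∪ b` into cocycles, `c` not being a homomorphism. -/
def cocycleXZ : Heis q × Heis q → ℤ := fun p =>
  p.1.a * p.2.c + q * Ring.choose p.1.a 2 * p.2.b

def cocycleYZ : Heis q × Heis q → ℤ := fun p =>
  p.1.c * p.2.b + q * p.1.a * Ring.choose p.2.b 2

def cupAB : Heis q × Heis q → ℤ := fun p => p.1.a * p.2.b

lemma cocycleXZ_mem : cocycleXZ ∈ cocycles₂ (Rep.trivial ℤ (Heis q) ℤ) := by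
  rw [mem_cocycles₂_trivial_iff]
  intro g h j
  simp only [cocycleXZ, mul_a, mul_b, mul_c, Ring.choose_two_add]
  ring

lemma cocycleYZ_mem : cocycleYZ ∈ cocycles₂ (Rep.trivial ℤ (Heis q) ℤ) := by
  rw [mem_cocycles₂_trivial_iff]
  intro g h j
  simp only [cocycleYZ, mul_a, mul_b, mul_c, Ring.choose_two_add]
  ring

lemma cupAB_mem : cupAB ∈ cocycles₂ (Rep.trivial ℤ (Heis q) ℤ) := by
  rw [mem_cocycles₂_trivial_iff]
  intro g h j
  simp only [cupAB, mul_a, mul_b]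
  ring

end Heis

abbrev NilGroup (q : ℕ) := PresentedGroup (nilRels q)

namespace NilGroup

variable (q : ℕ)

def x : NilGroup q := PresentedGroup.of 0
def y : NilGroup q := PresentedGroup.of 1
def z : NilGroup q := PresentedGroup.of 2

lemma x_mul_y : x q * y q = z q ^ q * y q * x q := by
  have h := PresentedGroup.one_of_mem (rels := nilRels q) (Set.mem_insert _ _)
  simp only [map_mul, map_inv, map_pow] at h
  rwa [mul_inv_eq_one, mul_inv_eq_iff_eq_mul, mul_inv_eq_iff_eq_mul] at h

lemma commute_x_z : Commute (x q) (z q) := by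
  have h := PresentedGroup.one_of_mem (rels := nilRels q)
    (Set.mem_insert_of_mem _ (Set.mem_insert _ _))
  simp only [map_mul, map_inv] at h
  rwa [mul_inv_eq_one, mul_inv_eq_iff_eq_mul] at h

lemma commute_y_z : Commute (y q) (z q) := by
  have h := PresentedGroup.one_of_mem (rels := nilRels q)
    (Set.mem_insert_of_mem _ (Set.mem_insert_of_mem _ rfl))
  simp only [map_mul, map_inv] at h
  rwa [mul_inv_eq_one, mul_inv_eq_iff_eq_mul] at h

section Lift

variable {q} {M : Type*} [Group M] {X Y Z : M}

def lift (hXY : X * Y = Z ^ q * Y * X) (hXZ : Commute X Z) (hYZ : Commute Y Z) :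
    NilGroup q →* M :=
  PresentedGroup.toGroup (f := ![X, Y, Z]) <| by
    rintro r (rfl | rfl | rfl) <;>
      simp only [map_mul, map_inv, map_pow, FreeGroup.lift_apply_of, Matrix.cons_val]
    · rw [hXY]; group
    · rw [hXZ.eq]; group
    · rw [hYZ.eq]; group

variable (hXY : X * Y = Z ^ q * Y * X) (hXZ : Commute X Z) (hYZ : Commute Y Z)

@[simp] lemma lift_x : lift hXY hXZ hYZ (x q) = X := PresentedGroup.toGroup.of _
@[simp] lemma lift_y : lift hXY hXZ hYZ (y q) = Y := PresentedGroup.toGroup.of _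
@[simp] lemma lift_z : lift hXY hXZ hYZ (z q) = Z := PresentedGroup.toGroup.of _

lemma hom_ext {φ ψ : NilGroup q →* M} (hx : φ (x q) = ψ (x q)) (hy : φ (y q) = ψ (y q))
    (hz : φ (z q) = ψ (z q)) : φ = ψ :=
  PresentedGroup.ext fun i => by fin_cases i <;> assumption

end Lift

def toHeis : NilGroup q →* Heis q :=
  lift (X := ⟨1, 0, 0⟩) (Y := ⟨0, 1, 0⟩) (Z := ⟨0, 0, 1⟩)
    (by rw [Heis.mk_zero_zero_pow]; ext <;> simp) (by ext <;> simp) (by ext <;> simp)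

@[simp] lemma toHeis_x : toHeis q (x q) = ⟨1, 0, 0⟩ := lift_x ..
@[simp] lemma toHeis_y : toHeis q (y q) = ⟨0, 1, 0⟩ := lift_y ..
@[simp] lemma toHeis_z : toHeis q (z q) = ⟨0, 0, 1⟩ := lift_z ..

def relatorDefect (f : NilGroup q × NilGroup q → ℤ) : ℤ :=
  f (x q, y q) - f (z q ^ q, y q) - f (z q ^ q * y q, x q)
    - ∑ i ∈ Finset.range q, f (z q ^ i, z q) + f (1, 1)

/- For a cocycle `f`, the lifts `⟨0, x⟩`, `⟨0, y⟩`, `⟨t, z⟩` to `CocycleExtension f` satisfy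
`xz = zx`, `yz = zy`, `xy = z^q yx` iff the first two components vanish and
`relatorDefect q f = q * t`. -/
def invariants : (NilGroup q × NilGroup q → ℤ) →+ ℤ × ℤ × ZMod q where
  toFun f := (f (x q, z q) - f (z q, x q), f (y q, z q) - f (z q, y q),
    (relatorDefect q f : ZMod q))
  map_zero' := by simp [relatorDefect]
  map_add' f f' := by
    simp only [relatorDefect, Pi.add_apply, Finset.sum_add_distrib, Prod.mk_add_mk]
    push_cast
    ext <;> dsimp only <;> ring

variable {q}

lemma invariants_d₁₂ (φ : NilGroup q → ℤ) :
    invariants q ((d₁₂ (Rep.trivial ℤ (NilGroup q) ℤ)).hom φ) = 0 := by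
  have telescope :
      ∑ i ∈ Finset.range q, (d₁₂ (Rep.trivial ℤ (NilGroup q) ℤ)).hom φ (z q ^ i, z q)
        = q * φ (z q) + φ 1 - φ (z q ^ q) := by
    simp only [d₁₂_hom_apply, Representation.trivial_apply, ← pow_succ,
      sub_add_eq_add_sub _ (φ _), add_sub_assoc, Finset.sum_add_distrib, Finset.sum_range_sub',
      Finset.sum_const, Finset.card_range, nsmul_eq_mul, pow_zero]
  have hdefect :
      relatorDefect q ((d₁₂ (Rep.trivial ℤ (NilGroup q) ℤ)).hom φ) = q * -φ (z q) := by
    rw [relatorDefect, telescope]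
    simp only [d₁₂_hom_apply, Representation.trivial_apply, ← x_mul_y, mul_one]
    ring
  simp only [invariants, AddMonoidHom.coe_mk, ZeroHom.coe_mk, hdefect, d₁₂_hom_apply,
    Representation.trivial_apply, (commute_x_z q).eq, (commute_y_z q).eq, Prod.mk_eq_zero]
  refine ⟨by ring, by ring, ?_⟩
  push_cast
  simp

lemma mem_coboundaries₂_of_invariants_eq_zero (f : cocycles₂ (Rep.trivial ℤ (NilGroup q) ℤ))
    (hf : invariants q f = 0) : ⇑f ∈ coboundaries₂ (Rep.trivial ℤ (NilGroup q) ℤ) := by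
  simp only [invariants, AddMonoidHom.coe_mk, ZeroHom.coe_mk, Prod.mk_eq_zero, sub_eq_zero,
    ZMod.intCast_zmod_eq_zero_iff_dvd] at hf
  obtain ⟨hxz, hyz, t, ht⟩ := hf
  let X : CocycleExtension f := ⟨0, x q⟩
  let Y : CocycleExtension f := ⟨0, y q⟩
  let Z : CocycleExtension f := ⟨t, z q⟩
  have hXZ : Commute X Z := CocycleExtension.commute_mk (commute_x_z q) hxz
  have hYZ : Commute Y Z := CocycleExtension.commute_mk (commute_y_z q) hyz
  have hXY : X * Y = Z ^ q * Y * X := by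
    simp only [X, Y, Z, CocycleExtension.mk_pow, CocycleExtension.mk_mul_mk, ← x_mul_y,
      CocycleExtension.mk.injEq, and_true]
    rw [relatorDefect] at ht
    linear_combination ht
  exact CocycleExtension.mem_coboundaries₂_of_section (s := lift hXY hXZ hYZ)
    (hom_ext rfl rfl rfl)

lemma invariants_eq_zero_iff (f : cocycles₂ (Rep.trivial ℤ (NilGroup q) ℤ)) :
    invariants q f = 0 ↔ ⇑f ∈ coboundaries₂ (Rep.trivial ℤ (NilGroup q) ℤ) :=
  ⟨mem_coboundaries₂_of_invariants_eq_zero f, fun ⟨φ, hφ⟩ => hφ ▸ invariants_d₁₂ φ⟩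

variable (q)

def cocycleXZ : cocycles₂ (Rep.trivial ℤ (NilGroup q) ℤ) :=
  ⟨_, comp_prodMap_mem_cocycles₂ (toHeis q) Heis.cocycleXZ_mem⟩

def cocycleYZ : cocycles₂ (Rep.trivial ℤ (NilGroup q) ℤ) :=
  ⟨_, comp_prodMap_mem_cocycles₂ (toHeis q) Heis.cocycleYZ_mem⟩

def cupAB : cocycles₂ (Rep.trivial ℤ (NilGroup q) ℤ) :=
  ⟨_, comp_prodMap_mem_cocycles₂ (toHeis q) Heis.cupAB_mem⟩

@[simp] lemma cocycleXZ_apply (g h : NilGroup q) :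
    cocycleXZ q (g, h) = Heis.cocycleXZ (toHeis q g, toHeis q h) := rfl

@[simp] lemma cocycleYZ_apply (g h : NilGroup q) :
    cocycleYZ q (g, h) = Heis.cocycleYZ (toHeis q g, toHeis q h) := rfl

@[simp] lemma cupAB_apply (g h : NilGroup q) :
    cupAB q (g, h) = Heis.cupAB (toHeis q g, toHeis q h) := rfl

lemma invariants_cocycleXZ : invariants q (cocycleXZ q) = (1, 0, 0) := by
  simp [invariants, relatorDefect, Heis.cocycleXZ]

lemma invariants_cocycleYZ : invariants q (cocycleYZ q) = (0, -1, 0) := by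
  simp [invariants, relatorDefect, Heis.cocycleYZ]

lemma invariants_cupAB : invariants q (cupAB q) = (0, 0, 1) := by
  simp [invariants, relatorDefect, Heis.cupAB]

lemma invariants_surjective :
    Function.Surjective fun f : cocycles₂ (Rep.trivial ℤ (NilGroup q) ℤ) => invariants q f := by
  rintro ⟨m, n, t⟩
  obtain ⟨t, rfl⟩ := ZMod.intCast_surjective t
  refine ⟨m • cocycleXZ q - n • cocycleYZ q + t • cupAB q, ?_⟩
  change invariants q (m • ⇑(cocycleXZ q) - n • ⇑(cocycleYZ q) + t • ⇑(cupAB q)) = _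
  simp only [map_add, map_sub, map_zsmul, invariants_cocycleXZ, invariants_cocycleYZ,
    invariants_cupAB]
  ext <;> simp

end NilGroup

theorem stmt15_general (q : ℕ) :
    Nonempty ((groupCohomology (Rep.trivial ℤ (PresentedGroup (nilRels q)) ℤ) 2) ≃+
      (ℤ × ℤ × ZMod q)) :=
  ⟨H2AddEquivOfSurjective ((NilGroup.invariants q).comp (cocycles₂ _).subtype.toAddMonoidHom)
    (NilGroup.invariants_surjective q) NilGroup.invariants_eq_zero_iff⟩

/-- For `q ≥ 1` and `Γ_q = ⟨x, y, z ∣ [x,y] = z^q, xz = zx, yz = zy⟩`, the second group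
cohomology `H²(Γ_q; ℤ)` with trivial coefficients `ℤ` is isomorphic as an abelian group
to `ℤ ⊕ ℤ ⊕ ℤ/qℤ`. -/
theorem stmt15 (q : ℕ) (hq : 1 ≤ q) :
    Nonempty ((groupCohomology (Rep.trivial ℤ (PresentedGroup (nilRels q)) ℤ) 2) ≃+
      (ℤ × ℤ × ZMod q)) :=
  stmt15_general q
end
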